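/- arXiv:1503.01369 — 8 statements merged into one kernel-verified Lean document; each statement's English description precedes it below -/
import Mathlib

section
/- Suppose ε := ‖Δ⁻¹‖·‖ω‖ and ε′ := ‖Δ⁻¹‖·‖Ω‖ satisfy ε ≥ 0, ε′ > 0 and ε′ ≤ (1 − ε)/2, and set r = (1 − ε)/(2ε′) + √(((1 − ε)/(2ε′))² − 1). Then there exists an m×n complex matrix B with ‖B‖ ≤ r that is a fixed point of T(A) = −Δ⁻¹Ω + Δ⁻¹Aω + Δ⁻¹AΩ†A, i.e., B satisfies Bloch's equation Ω + ΔB = Bω + BΩ†B. -/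
/-!
Bloch's equation says that `B` is a fixed point of `T(A) = Δ⁻¹(Aω + AΩᴴA - Ω)`. The map `T` is
majorized by the real quadratic `g(t) = ε' + εt + ε't²`: if `‖Y‖ ≤ a`, `‖X‖ ≤ b` and
`‖X - Y‖ ≤ b - a`, then `‖TX - TY‖ ≤ (ε + ε'(a + b))(b - a) = g b - g a`. The hypothesis on
`ε'` says exactly that `g` has the real fixed points `(1-ε)/(2ε') ± √(((1-ε)/(2ε'))² - 1)`, so
the iterates `gᵏ(0)` increase to a limit at most `r`, and they dominate the increments of the
iterates `Tᵏ(0)`. Hence `Tᵏ(0)` is Cauchy and converges to a fixed point of norm at most `r`.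
No contraction argument is available: at `ε' = (1-ε)/2` the two roots of `g` coincide and `T`
need not be contracting on the ball of radius `r`.
-/

open Matrix Function Set
open scoped Matrix.Norms.L2Operator

lemma iterate_mem_Icc_and_le_iterate_succ {α : Type*} [Preorder α] {g : α → α} {a L : α}
    (haL : a ≤ L) (hg : MonotoneOn g (Icc a L)) (hga : a ≤ g a) (hgL : g L ≤ L) (k : ℕ) :
    g^[k] a ∈ Icc a L ∧ g^[k] a ≤ g^[k + 1] a := by
  induction k with
  | zero => exact ⟨⟨le_rfl, haL⟩, hga⟩
  | succ k ih =>
    obtain ⟨hk, hle⟩ := ih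
    have hL : L ∈ Icc a L := ⟨haL, le_rfl⟩
    have hk' : g^[k + 1] a ∈ Icc a L := ⟨hk.1.trans hle, by
      rw [iterate_succ_apply']; exact (hg hk hL hk.2).trans hgL⟩
    have hmono := hg hk hk' hle
    rw [← iterate_succ_apply' g k, ← iterate_succ_apply' g (k + 1)] at hmono
    exact ⟨hk', hmono⟩

/-- Kantorovich's method of majorants for the iterates of `T` starting at `0`. -/
theorem exists_isFixedPt_norm_le_of_majorant {E : Type*} [NormedAddCommGroup E] [CompleteSpace E]
    {T : E → E} (hT : Continuous T) {g : ℝ → ℝ} {L : ℝ} (hL : 0 ≤ L)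
    (hg : MonotoneOn g (Icc 0 L)) (hgL : g L ≤ L) (hT0 : ‖T 0‖ ≤ g 0)
    (hmaj : ∀ x y a b, ‖y‖ ≤ a → ‖x‖ ≤ b → ‖x - y‖ ≤ b - a → ‖T x - T y‖ ≤ g b - g a) :
    ∃ x, IsFixedPt T x ∧ ‖x‖ ≤ L := by
  set A : ℕ → E := fun k => T^[k] 0
  set s : ℕ → ℝ := fun k => g^[k] 0
  have hs := iterate_mem_Icc_and_le_iterate_succ hL hg ((norm_nonneg _).trans hT0) hgL
  have hdom : ∀ k, ‖A k‖ ≤ s k ∧ ‖A (k + 1) - A k‖ ≤ s (k + 1) - s k := by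
    intro k
    induction k with
    | zero => simpa [A, s] using hT0
    | succ k ih =>
      have hAk : ‖A (k + 1)‖ ≤ s (k + 1) := by
        linarith [norm_le_norm_add_norm_sub' (A (k + 1)) (A k), ih.1, ih.2]
      refine ⟨hAk, ?_⟩
      simpa only [A, s, ← iterate_succ_apply'] using hmaj _ _ _ _ ih.1 hAk ih.2
  have hsum : Summable fun k => s (k + 1) - s k := by
    refine summable_of_sum_range_le (c := L) (fun k => sub_nonneg.2 (hs k).2) fun k => ?_
    rw [Finset.sum_range_sub]
    simpa [s] using (hs k).1.2
  have hA : CauchySeq A := cauchySeq_of_dist_le_of_summable _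
    (fun k => by rw [dist_comm, dist_eq_norm]; exact (hdom k).2) hsum
  obtain ⟨x, hx⟩ := cauchySeq_tendsto_of_complete hA
  refine ⟨x, isFixedPt_of_tendsto_iterate hx hT.continuousAt, ?_⟩
  exact le_of_tendsto' hx.norm fun k => (hdom k).1.trans (hs k).1.2

def blochMajorant (ε ε' t : ℝ) : ℝ := ε' + ε * t + ε' * t ^ 2

lemma blochMajorant_sub (ε ε' a b : ℝ) :
    blochMajorant ε ε' b - blochMajorant ε ε' a = (ε + ε' * (a + b)) * (b - a) := by
  unfold blochMajorant; ring

lemma monotoneOn_blochMajorant {ε ε' : ℝ} (hε : 0 ≤ ε) (hε' : 0 ≤ ε') :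
    MonotoneOn (blochMajorant ε ε') (Ici 0) := fun a ha b _ hab => by
  have ha : (0 : ℝ) ≤ a := ha
  have : 0 ≤ (ε + ε' * (a + b)) * (b - a) :=
    mul_nonneg (add_nonneg hε (mul_nonneg hε' (by linarith))) (by linarith)
  linarith [blochMajorant_sub ε ε' a b]

lemma isFixedPt_blochMajorant {ε ε' : ℝ} (hε' : 0 < ε') (h : ε' ≤ (1 - ε) / 2) :
    IsFixedPt (blochMajorant ε ε')
      ((1 - ε) / (2 * ε') + √(((1 - ε) / (2 * ε')) ^ 2 - 1)) := by
  have hc : 2 * ε' * ((1 - ε) / (2 * ε')) = 1 - ε := mul_div_cancel₀ _ (by positivity)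
  have hc1 : 1 ≤ (1 - ε) / (2 * ε') := (one_le_div (by positivity)).2 (by linarith)
  generalize (1 - ε) / (2 * ε') = c at hc hc1 ⊢
  have hsq : √(c ^ 2 - 1) ^ 2 = c ^ 2 - 1 := Real.sq_sqrt (by nlinarith)
  unfold IsFixedPt blochMajorant
  linear_combination (c + √(c ^ 2 - 1)) * hc + ε' * hsq

section Bloch

variable {𝕜 : Type*} [RCLike 𝕜] {m n : Type*} [Fintype m] [Fintype n]

def blochMap (D : Matrix m m 𝕜) (ω : Matrix n n 𝕜) (Ω : Matrix m n 𝕜) (A : Matrix m n 𝕜) :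
    Matrix m n 𝕜 :=
  D * (A * ω + A * Ωᴴ * A - Ω)

variable (D : Matrix m m 𝕜) (ω : Matrix n n 𝕜) (Ω : Matrix m n 𝕜)

lemma continuous_blochMap : Continuous (blochMap D ω Ω) := by
  unfold blochMap; fun_prop

lemma blochMap_sub_blochMap (X Y : Matrix m n 𝕜) :
    blochMap D ω Ω X - blochMap D ω Ω Y =
      D * ((X - Y) * ω + (X - Y) * Ωᴴ * X + Y * Ωᴴ * (X - Y)) := by
  rw [blochMap, blochMap, ← Matrix.mul_sub]
  congr 1
  simp only [Matrix.sub_mul, Matrix.mul_sub]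
  abel

variable [DecidableEq m]

lemma isFixedPt_blochMap_inv_iff {Δ : Matrix m m 𝕜} (hΔ : IsUnit Δ) (B : Matrix m n 𝕜) :
    IsFixedPt (blochMap Δ⁻¹ ω Ω) B ↔ Ω + Δ * B = B * ω + B * Ωᴴ * B := by
  have := hΔ.invertible
  rw [IsFixedPt, blochMap, inv_mul_eq_iff_eq_mul_of_invertible, eq_comm, eq_sub_iff_add_eq']

variable [DecidableEq n]

lemma norm_blochMap_zero_le : ‖blochMap D ω Ω 0‖ ≤ ‖D‖ * ‖Ω‖ := by
  simpa [blochMap] using l2_opNorm_mul D (-Ω)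

lemma norm_blochMap_sub_le (X Y : Matrix m n 𝕜) :
    ‖blochMap D ω Ω X - blochMap D ω Ω Y‖ ≤
      (‖D‖ * ‖ω‖ + ‖D‖ * ‖Ω‖ * (‖X‖ + ‖Y‖)) * ‖X - Y‖ := by
  have hmul₃ : ∀ (P : Matrix m n 𝕜) (R : Matrix m n 𝕜), ‖P * Ωᴴ * R‖ ≤ ‖P‖ * ‖Ω‖ * ‖R‖ :=
    fun P R => calc
      ‖P * Ωᴴ * R‖ ≤ ‖P * Ωᴴ‖ * ‖R‖ := l2_opNorm_mul _ _
      _ ≤ ‖P‖ * ‖Ωᴴ‖ * ‖R‖ := by gcongr; exact l2_opNorm_mul _ _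
      _ = ‖P‖ * ‖Ω‖ * ‖R‖ := by rw [l2_opNorm_conjTranspose]
  have hsum : ‖(X - Y) * ω + (X - Y) * Ωᴴ * X + Y * Ωᴴ * (X - Y)‖ ≤
      ‖X - Y‖ * ‖ω‖ + ‖X - Y‖ * ‖Ω‖ * ‖X‖ + ‖Y‖ * ‖Ω‖ * ‖X - Y‖ :=
    norm_add₃_le.trans (add_le_add_three (l2_opNorm_mul _ _) (hmul₃ _ _) (hmul₃ _ _))
  rw [blochMap_sub_blochMap]
  calc _ ≤ ‖D‖ * ‖(X - Y) * ω + (X - Y) * Ωᴴ * X + Y * Ωᴴ * (X - Y)‖ := l2_opNorm_mul _ _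
    _ ≤ ‖D‖ * (‖X - Y‖ * ‖ω‖ + ‖X - Y‖ * ‖Ω‖ * ‖X‖ + ‖Y‖ * ‖Ω‖ * ‖X - Y‖) := by gcongr
    _ = _ := by ring

lemma norm_blochMap_sub_le_blochMajorant_sub {X Y : Matrix m n 𝕜} {a b : ℝ} (hY : ‖Y‖ ≤ a)
    (hX : ‖X‖ ≤ b) (hXY : ‖X - Y‖ ≤ b - a) :
    ‖blochMap D ω Ω X - blochMap D ω Ω Y‖ ≤
      blochMajorant (‖D‖ * ‖ω‖) (‖D‖ * ‖Ω‖) b - blochMajorant (‖D‖ * ‖ω‖) (‖D‖ * ‖Ω‖) a := by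
  have ha : 0 ≤ a := (norm_nonneg _).trans hY
  have hb : 0 ≤ b := (norm_nonneg _).trans hX
  rw [blochMajorant_sub]
  refine (norm_blochMap_sub_le D ω Ω X Y).trans (mul_le_mul ?_ hXY (norm_nonneg _) ?_)
  · have : ‖X‖ + ‖Y‖ ≤ a + b := by linarith
    gcongr
  · positivity

end Bloch

/-- If `ε = ‖Δ⁻¹‖‖ω‖` and `ε′ = ‖Δ⁻¹‖‖Ω‖` satisfy `ε ≥ 0`, `ε′ > 0`,
`ε′ ≤ (1-ε)/2`, and `r = (1-ε)/(2ε′) + √(((1-ε)/(2ε′))² - 1)`, then there exists an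
`m × n` complex matrix `B` with `‖B‖ ≤ r` satisfying Bloch's equation
`Ω + ΔB = Bω + BΩᴴB` (i.e. a fixed point of `T(A) = -Δ⁻¹Ω + Δ⁻¹Aω + Δ⁻¹AΩᴴA`). -/
theorem stmt3 (m n : ℕ) (ω : Matrix (Fin n) (Fin n) ℂ)
    (Δ : Matrix (Fin m) (Fin m) ℂ) (hΔ : IsUnit Δ)
    (Ω : Matrix (Fin m) (Fin n) ℂ)
    (ε ε' : ℝ) (hε : ε = ‖Δ⁻¹‖ * ‖ω‖) (hε' : ε' = ‖Δ⁻¹‖ * ‖Ω‖)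
    (hε0 : 0 ≤ ε) (hε'0 : 0 < ε') (h : ε' ≤ (1 - ε) / 2)
    (r : ℝ) (hr : r = (1 - ε) / (2 * ε') + Real.sqrt (((1 - ε) / (2 * ε')) ^ 2 - 1)) :
    ∃ B : Matrix (Fin m) (Fin n) ℂ, ‖B‖ ≤ r ∧ Ω + Δ * B = B * ω + B * Ωᴴ * B := by
  have hr0 : 0 ≤ r := hr ▸ add_nonneg (div_nonneg (by linarith) (by linarith)) (Real.sqrt_nonneg _)
  have hr_fix : IsFixedPt (blochMajorant ε ε') r := hr ▸ isFixedPt_blochMajorant hε'0 h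
  subst hε hε'
  obtain ⟨B, hB, hBr⟩ := exists_isFixedPt_norm_le_of_majorant (continuous_blochMap Δ⁻¹ ω Ω) hr0
    ((monotoneOn_blochMajorant hε0 hε'0.le).mono Icc_subset_Ici_self) hr_fix.eq.le
    (by simpa [blochMajorant] using norm_blochMap_zero_le Δ⁻¹ ω Ω)
    fun _ _ _ _ => norm_blochMap_sub_le_blochMajorant_sub Δ⁻¹ ω Ω
  exact ⟨B, hBr, (isFixedPt_blochMap_inv_iff ω Ω hΔ B).1 hB⟩
end

section
/- An m×n complex matrix B satisfies Bloch's equation Ω + ΔB = Bω + BΩ†B if and only if the linear subspace {(α, Bα) : α ∈ ℂⁿ} of ℂⁿ ⊕ ℂᵐ is invariant under the block operator H = [[ω, Ω†],[Ω, Δ]] (i.e., H maps every vector of the form (α, Bα) to a vector of the same form). -/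
open Matrix

/-- An `m × n` complex matrix `B` satisfies Bloch's equation
`Ω + ΔB = Bω + BΩᴴB` iff the subspace `{(α, Bα) : α ∈ ℂⁿ}` of `ℂⁿ ⊕ ℂᵐ` is
invariant under the block operator `H = [[ω, Ωᴴ],[Ω, Δ]]`. -/
theorem stmt4 (m n : ℕ) (ω : Matrix (Fin n) (Fin n) ℂ)
    (Δ : Matrix (Fin m) (Fin m) ℂ) (Ω : Matrix (Fin m) (Fin n) ℂ)
    (B : Matrix (Fin m) (Fin n) ℂ) :
    (Ω + Δ * B = B * ω + B * Ωᴴ * B) ↔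
      (∀ α : Fin n → ℂ, ∃ α' : Fin n → ℂ,
        (Matrix.fromBlocks ω Ωᴴ Ω Δ) *ᵥ (Sum.elim α (B *ᵥ α)) =
          Sum.elim α' (B *ᵥ α')) := by
  constructor
  · intro h α
    refine ⟨ω *ᵥ α + Ωᴴ *ᵥ (B *ᵥ α), ?_⟩
    have key : Ω *ᵥ α + (Δ * B) *ᵥ α = (B * ω) *ᵥ α + (B * (Ωᴴ * B)) *ᵥ α := by
      have := congrArg (· *ᵥ α) h
      simpa [add_mulVec, Matrix.mul_assoc] using this
    simp [fromBlocks_mulVec, Sum.elim_comp_inl, Sum.elim_comp_inr, mulVec_add,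
      mulVec_mulVec, Matrix.mul_assoc, key]
  · intro h
    ext i j
    obtain ⟨α', hα'⟩ := h (Pi.single j 1)
    simp only [fromBlocks_mulVec, Sum.elim_comp_inl, Sum.elim_comp_inr] at hα'
    have h1 : α' = ω *ᵥ Pi.single j 1 + Ωᴴ *ᵥ (B *ᵥ Pi.single j 1) :=
      (congrArg (fun f => f ∘ Sum.inl) hα').symm
    have h2 : Ω *ᵥ Pi.single j 1 + Δ *ᵥ (B *ᵥ Pi.single j 1) = B *ᵥ α' :=
      congrArg (fun f => f ∘ Sum.inr) hα'
    rw [h1] at h2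
    have := congrFun h2 i
    simpa [add_mulVec, mulVec_mulVec, mulVec_add, mulVec_single, Matrix.mul_assoc, mul_apply, mulVec, dotProduct, mul_add, Finset.sum_add_distrib,
      MulOpposite.op_one] using this
end

section
/- Let B be an m×n complex matrix satisfying Bloch's equation Ω + ΔB = Bω + BΩ†B, and let h_eff = ω + Ω†B. If α⋆ ∈ ℂⁿ is an eigenvector of h_eff with eigenvalue λ ∈ ℂ, then the vector ψ⋆ = (α⋆, Bα⋆) ∈ ℂⁿ ⊕ ℂᵐ is an eigenvector of the block matrix H = [[ω, Ω†],[Ω, Δ]] with the same eigenvalue λ. -/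
open Matrix

/-- If `B` solves Bloch's equation `Ω + ΔB = Bω + BΩᴴB` and
`α⋆ ∈ ℂⁿ` is an eigenvector of `h_eff = ω + ΩᴴB` with eigenvalue `λ`, then
`ψ⋆ = (α⋆, Bα⋆)` is an eigenvector of `H = [[ω, Ωᴴ],[Ω, Δ]]` with eigenvalue `λ`. -/
theorem stmt5 (m n : ℕ) (ω : Matrix (Fin n) (Fin n) ℂ)
    (Δ : Matrix (Fin m) (Fin m) ℂ) (Ω : Matrix (Fin m) (Fin n) ℂ)
    (B : Matrix (Fin m) (Fin n) ℂ)
    (hB : Ω + Δ * B = B * ω + B * Ωᴴ * B)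
    (α : Fin n → ℂ) (lam : ℂ) (hα : α ≠ 0)
    (heig : (ω + Ωᴴ * B) *ᵥ α = lam • α) :
    Sum.elim α (B *ᵥ α) ≠ 0 ∧
      (Matrix.fromBlocks ω Ωᴴ Ω Δ) *ᵥ (Sum.elim α (B *ᵥ α)) =
        lam • Sum.elim α (B *ᵥ α) := by
  refine ⟨fun h => hα (funext fun i => congrFun h (Sum.inl i)), ?_⟩
  have htop : ω *ᵥ α + Ωᴴ *ᵥ (B *ᵥ α) = lam • α := by
    rw [mulVec_mulVec, ← add_mulVec, heig]
  have hbot : Ω *ᵥ α + Δ *ᵥ (B *ᵥ α) = lam • (B *ᵥ α) := by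
    calc Ω *ᵥ α + Δ *ᵥ (B *ᵥ α) = (Ω + Δ * B) *ᵥ α := by
          rw [add_mulVec, mulVec_mulVec]
      _ = (B * ω + B * Ωᴴ * B) *ᵥ α := by rw [hB]
      _ = B *ᵥ ((ω + Ωᴴ * B) *ᵥ α) := by
          rw [mulVec_mulVec, Matrix.mul_add, add_mulVec, Matrix.mul_assoc, add_mulVec]
      _ = lam • (B *ᵥ α) := by rw [heig, mulVec_smul]
  rw [fromBlocks_mulVec]
  have e1 : (Sum.elim α (B *ᵥ α)) ∘ Sum.inl = α := rfl
  have e2 : (Sum.elim α (B *ᵥ α)) ∘ Sum.inr = B *ᵥ α := rfl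
  rw [e1, e2, htop, hbot]
  funext i; cases i <;> rfl
end

section
/- Let B be an m×n complex matrix and let ψ = (α, γ) ∈ ℂⁿ ⊕ ℂᵐ with γ = Bα and ψ ≠ 0 be an eigenvector of the block matrix H = [[ω, Ω†],[Ω, Δ]] with eigenvalue λ. Then α ≠ 0 and α is an eigenvector of the effective operator h_eff = ω + Ω†B with the same eigenvalue λ. -/
open Matrix

/-- If `ψ = (α, Bα) ≠ 0` is an eigenvector of the block matrix
`H = [[ω, Ωᴴ],[Ω, Δ]]` with eigenvalue `λ`, then `α ≠ 0` and `α` is an eigenvector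
of the effective operator `h_eff = ω + ΩᴴB` with the same eigenvalue `λ`. -/
theorem stmt6 (m n : ℕ) (ω : Matrix (Fin n) (Fin n) ℂ)
    (Δ : Matrix (Fin m) (Fin m) ℂ) (Ω : Matrix (Fin m) (Fin n) ℂ)
    (B : Matrix (Fin m) (Fin n) ℂ)
    (α : Fin n → ℂ) (lam : ℂ)
    (hψ : Sum.elim α (B *ᵥ α) ≠ 0)
    (heig : (Matrix.fromBlocks ω Ωᴴ Ω Δ) *ᵥ (Sum.elim α (B *ᵥ α)) =
      lam • Sum.elim α (B *ᵥ α)) :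
    α ≠ 0 ∧ (ω + Ωᴴ * B) *ᵥ α = lam • α := by
  have hα : α ≠ 0 := by
    intro h
    apply hψ
    subst h
    simp [Matrix.mulVec_zero]
  refine ⟨hα, ?_⟩
  rw [Matrix.fromBlocks_mulVec] at heig
  have htop := congrArg (fun f => f ∘ Sum.inl) heig
  funext i
  have := congrFun htop i
  simpa [Matrix.add_mulVec, Matrix.mulVec_mulVec] using this
end

section
/- Let ω and Δ be Hermitian and let B be an m×n complex matrix satisfying Bloch's equation Ω + ΔB = Bω + BΩ†B. Then the operator h₁ = (1 + B†B)(ω + Ω†B) is Hermitian. -/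
open Matrix

/-- If `ω` and `Δ` are Hermitian and `B` solves Bloch's equation
`Ω + ΔB = Bω + BΩᴴB`, then `h₁ = (1 + BᴴB)(ω + ΩᴴB)` is Hermitian. -/
theorem stmt9 (m n : ℕ) (ω : Matrix (Fin n) (Fin n) ℂ) (hω : ω.IsHermitian)
    (Δ : Matrix (Fin m) (Fin m) ℂ) (hΔ : Δ.IsHermitian)
    (Ω : Matrix (Fin m) (Fin n) ℂ)
    (B : Matrix (Fin m) (Fin n) ℂ)
    (hB : Ω + Δ * B = B * ω + B * Ωᴴ * B) :
    ((1 + Bᴴ * B) * (ω + Ωᴴ * B)).IsHermitian := by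
  have key : (1 + Bᴴ * B) * (ω + Ωᴴ * B) = ω + Ωᴴ * B + Bᴴ * Ω + Bᴴ * Δ * B := by
    have h2 : Bᴴ * (Ω + Δ * B) = Bᴴ * (B * ω + B * Ωᴴ * B) := by rw [hB]
    calc (1 + Bᴴ * B) * (ω + Ωᴴ * B)
        = ω + Ωᴴ * B + Bᴴ * (B * ω + B * Ωᴴ * B) := by
          simp only [Matrix.add_mul, Matrix.mul_add, Matrix.one_mul, Matrix.mul_assoc]; abel
      _ = ω + Ωᴴ * B + Bᴴ * (Ω + Δ * B) := by rw [h2]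
      _ = ω + Ωᴴ * B + Bᴴ * Ω + Bᴴ * Δ * B := by
          simp only [Matrix.mul_add, Matrix.mul_assoc]; abel
  rw [key]
  unfold Matrix.IsHermitian
  simp only [conjTranspose_add, conjTranspose_mul, conjTranspose_conjTranspose,
    hω.eq, hΔ.eq]
  simp only [Matrix.mul_assoc]; abel
end

section
/- For any m×n complex matrix B, the (n+m)×(n+m) block matrix W with blocks W₁₁ = (1 + B†B)^{-1/2}, W₁₂ = −B†(1 + BB†)^{-1/2}, W₂₁ = B(1 + B†B)^{-1/2}, W₂₂ = (1 + BB†)^{-1/2} is unitary. -/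
open Matrix
open scoped ComplexOrder

/-- For any `m × n` complex matrix `B`, the block matrix
`W = [[(1+BᴴB)^{-1/2}, -Bᴴ(1+BBᴴ)^{-1/2}],[B(1+BᴴB)^{-1/2}, (1+BBᴴ)^{-1/2}]]`
is unitary; here `S₁`, `S₂` are the positive-definite square roots of `1 + BᴴB`
and `1 + BBᴴ` respectively, and the `{-1/2}` powers are their inverses. -/
theorem stmt14 (m n : ℕ) (B : Matrix (Fin m) (Fin n) ℂ)
    (S₁ : Matrix (Fin n) (Fin n) ℂ) (hS₁ : S₁.PosDef) (hS₁sq : S₁ * S₁ = 1 + Bᴴ * B)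
    (S₂ : Matrix (Fin m) (Fin m) ℂ) (hS₂ : S₂.PosDef) (hS₂sq : S₂ * S₂ = 1 + B * Bᴴ) :
    Matrix.fromBlocks S₁⁻¹ (-(Bᴴ * S₂⁻¹)) (B * S₁⁻¹) S₂⁻¹ ∈
      Matrix.unitaryGroup (Fin n ⊕ Fin m) ℂ := by
  have hS₁h : S₁ᴴ = S₁ := hS₁.isHermitian
  have hS₂h : S₂ᴴ = S₂ := hS₂.isHermitian
  have hS₁u : IsUnit S₁.det := isUnit_iff_ne_zero.mpr hS₁.det_pos.ne'
  have hS₂u : IsUnit S₂.det := isUnit_iff_ne_zero.mpr hS₂.det_pos.ne'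
  set A₁ := (1 + Bᴴ * B) with hA₁def
  set A₂ := (1 + B * Bᴴ) with hA₂def
  have hA₁u : IsUnit A₁.det := by
    rw [← hS₁sq, det_mul]; exact hS₁u.mul hS₁u
  have hA₂u : IsUnit A₂.det := by
    rw [← hS₂sq, det_mul]; exact hS₂u.mul hS₂u
  have hinv₁ : S₁⁻¹ * S₁⁻¹ = A₁⁻¹ := by
    rw [← hS₁sq, Matrix.mul_inv_rev]
  have hinv₂ : S₂⁻¹ * S₂⁻¹ = A₂⁻¹ := by
    rw [← hS₂sq, Matrix.mul_inv_rev]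
  have hint : Bᴴ * A₂ = A₁ * Bᴴ := by
    rw [hA₁def, hA₂def, Matrix.mul_add, Matrix.add_mul, Matrix.mul_one, Matrix.one_mul, Matrix.mul_assoc]
  have hintB : B * A₁ = A₂ * B := by
    rw [hA₁def, hA₂def, Matrix.mul_add, Matrix.add_mul, Matrix.mul_one, Matrix.one_mul, Matrix.mul_assoc]
  have hint' : A₁⁻¹ * Bᴴ = Bᴴ * A₂⁻¹ := by
    calc A₁⁻¹ * Bᴴ = A₁⁻¹ * ((Bᴴ * A₂) * A₂⁻¹) := by
          rw [Matrix.mul_assoc Bᴴ, Matrix.mul_nonsing_inv _ hA₂u, Matrix.mul_one]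
      _ = A₁⁻¹ * (A₁ * (Bᴴ * A₂⁻¹)) := by rw [hint, Matrix.mul_assoc]
      _ = Bᴴ * A₂⁻¹ := by rw [← Matrix.mul_assoc, Matrix.nonsing_inv_mul _ hA₁u, Matrix.one_mul]
  have hintB' : B * A₁⁻¹ = A₂⁻¹ * B := by
    calc B * A₁⁻¹ = A₂⁻¹ * ((A₂ * B) * A₁⁻¹) := by
          rw [← Matrix.mul_assoc, ← Matrix.mul_assoc, Matrix.nonsing_inv_mul _ hA₂u,
            Matrix.one_mul]
      _ = A₂⁻¹ * ((B * A₁) * A₁⁻¹) := by rw [hintB]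
      _ = A₂⁻¹ * B := by rw [Matrix.mul_assoc, Matrix.mul_nonsing_inv _ hA₁u, Matrix.mul_one]
  have hS₁ih : (S₁⁻¹)ᴴ = S₁⁻¹ := by rw [Matrix.conjTranspose_nonsing_inv, hS₁h]
  have hS₂ih : (S₂⁻¹)ᴴ = S₂⁻¹ := by rw [Matrix.conjTranspose_nonsing_inv, hS₂h]
  rw [Matrix.mem_unitaryGroup_iff, Matrix.star_eq_conjTranspose,
    Matrix.fromBlocks_conjTranspose, Matrix.fromBlocks_multiply]
  have h11 : S₁⁻¹ * (S₁⁻¹)ᴴ + -(Bᴴ * S₂⁻¹) * (-(Bᴴ * S₂⁻¹))ᴴ = 1 := by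
    rw [hS₁ih, Matrix.conjTranspose_neg, Matrix.neg_mul, Matrix.mul_neg, neg_neg,
      Matrix.conjTranspose_mul, hS₂ih, hinv₁, conjTranspose_conjTranspose]
    have e : Bᴴ * S₂⁻¹ * (S₂⁻¹ * B) = A₁⁻¹ * (Bᴴ * B) := by
      rw [Matrix.mul_assoc, ← Matrix.mul_assoc S₂⁻¹, hinv₂,
        ← Matrix.mul_assoc, ← hint', Matrix.mul_assoc]
    rw [e]
    calc A₁⁻¹ + A₁⁻¹ * (Bᴴ * B) = A₁⁻¹ * A₁ := by rw [hA₁def, mul_add, mul_one]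
      _ = 1 := Matrix.nonsing_inv_mul _ hA₁u
  have h12 : S₁⁻¹ * (B * S₁⁻¹)ᴴ + -(Bᴴ * S₂⁻¹) * (S₂⁻¹)ᴴ = 0 := by
    rw [Matrix.conjTranspose_mul, hS₁ih, hS₂ih, Matrix.neg_mul,
      ← Matrix.mul_assoc, hinv₁, Matrix.mul_assoc Bᴴ, hinv₂, hint', add_neg_cancel]
  have h21 : B * S₁⁻¹ * (S₁⁻¹)ᴴ + S₂⁻¹ * (-(Bᴴ * S₂⁻¹))ᴴ = 0 := by
    rw [hS₁ih, Matrix.conjTranspose_neg, Matrix.mul_neg, Matrix.conjTranspose_mul,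
      hS₂ih, conjTranspose_conjTranspose, Matrix.mul_assoc B, hinv₁,
      ← Matrix.mul_assoc S₂⁻¹, hinv₂, hintB', add_neg_cancel]
  have h22 : B * S₁⁻¹ * (B * S₁⁻¹)ᴴ + S₂⁻¹ * (S₂⁻¹)ᴴ = 1 := by
    rw [Matrix.conjTranspose_mul, hS₁ih, hS₂ih, hinv₂, Matrix.mul_assoc B,
      ← Matrix.mul_assoc S₁⁻¹, hinv₁, ← Matrix.mul_assoc B, hintB', Matrix.mul_assoc]
    calc A₂⁻¹ * (B * Bᴴ) + A₂⁻¹ = A₂⁻¹ * A₂ := by rw [hA₂def, mul_add, mul_one, add_comm]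
      _ = 1 := Matrix.nonsing_inv_mul _ hA₂u
  rw [h11, h12, h21, h22, Matrix.fromBlocks_one]
end

section
/- Let ω and Δ be Hermitian and let B be an m×n complex matrix. Let W be the (n+m)×(n+m) unitary block matrix with blocks W₁₁ = (1 + B†B)^{-1/2}, W₁₂ = −B†(1 + BB†)^{-1/2}, W₂₁ = B(1 + B†B)^{-1/2}, W₂₂ = (1 + BB†)^{-1/2}, and let H = [[ω, Ω†],[Ω, Δ]]. Then W† H W is block diagonal (its off-diagonal n×m and m×n blocks vanish) if and only if B satisfies Bloch's equation Ω + ΔB = Bω + BΩ†B. -/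
open Matrix
open scoped ComplexOrder

/-- Let `ω`, `Δ` be Hermitian, `B` an `m × n` complex matrix, and let
`W = [[(1+BᴴB)^{-1/2}, -Bᴴ(1+BBᴴ)^{-1/2}],[B(1+BᴴB)^{-1/2}, (1+BBᴴ)^{-1/2}]]` (where
`S₁`, `S₂` are the positive-definite square roots of `1+BᴴB`, `1+BBᴴ`), and
`H = [[ω, Ωᴴ],[Ω, Δ]]`. Then `Wᴴ H W` is block diagonal (both off-diagonal blocks
vanish) iff `B` satisfies Bloch's equation `Ω + ΔB = Bω + BΩᴴB`. -/
theorem stmt15 (m n : ℕ) (ω : Matrix (Fin n) (Fin n) ℂ) (hω : ω.IsHermitian)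
    (Δ : Matrix (Fin m) (Fin m) ℂ) (hΔ : Δ.IsHermitian)
    (Ω : Matrix (Fin m) (Fin n) ℂ)
    (B : Matrix (Fin m) (Fin n) ℂ)
    (S₁ : Matrix (Fin n) (Fin n) ℂ) (hS₁ : S₁.PosDef) (hS₁sq : S₁ * S₁ = 1 + Bᴴ * B)
    (S₂ : Matrix (Fin m) (Fin m) ℂ) (hS₂ : S₂.PosDef) (hS₂sq : S₂ * S₂ = 1 + B * Bᴴ)
    (W : Matrix (Fin n ⊕ Fin m) (Fin n ⊕ Fin m) ℂ)
    (hW : W = Matrix.fromBlocks S₁⁻¹ (-(Bᴴ * S₂⁻¹)) (B * S₁⁻¹) S₂⁻¹)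
    (H : Matrix (Fin n ⊕ Fin m) (Fin n ⊕ Fin m) ℂ)
    (hH : H = Matrix.fromBlocks ω Ωᴴ Ω Δ) :
    ((∀ (i : Fin n) (j : Fin m), (Wᴴ * H * W) (Sum.inl i) (Sum.inr j) = 0) ∧
      (∀ (i : Fin m) (j : Fin n), (Wᴴ * H * W) (Sum.inr i) (Sum.inl j) = 0)) ↔
      Ω + Δ * B = B * ω + B * Ωᴴ * B := by
  subst hW hH
  have hu₁ : IsUnit S₁.det := (Matrix.isUnit_iff_isUnit_det _).mp hS₁.isUnit
  have hu₂ : IsUnit S₂.det := (Matrix.isUnit_iff_isUnit_det _).mp hS₂.isUnit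
  have h₁h : S₁⁻¹ᴴ = S₁⁻¹ := by rw [conjTranspose_nonsing_inv, hS₁.isHermitian.eq]
  have h₂h : S₂⁻¹ᴴ = S₂⁻¹ := by rw [conjTranspose_nonsing_inv, hS₂.isHermitian.eq]
  set X : Matrix (Fin m) (Fin n) ℂ := Ω + Δ * B - (B * ω + B * Ωᴴ * B) with hX
  have key : (Matrix.fromBlocks S₁⁻¹ (-(Bᴴ * S₂⁻¹)) (B * S₁⁻¹) S₂⁻¹)ᴴ *
      Matrix.fromBlocks ω Ωᴴ Ω Δ *
      Matrix.fromBlocks S₁⁻¹ (-(Bᴴ * S₂⁻¹)) (B * S₁⁻¹) S₂⁻¹ =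
      Matrix.fromBlocks (S₁⁻¹ * (ω + Ωᴴ * B + Bᴴ * Ω + Bᴴ * Δ * B) * S₁⁻¹) (S₁⁻¹ * Xᴴ * S₂⁻¹)
        (S₂⁻¹ * X * S₁⁻¹) (S₂⁻¹ * (Δ - Ω * Bᴴ - B * Ωᴴ + B * ω * Bᴴ) * S₂⁻¹) := by
    rw [Matrix.fromBlocks_conjTranspose, Matrix.fromBlocks_multiply, Matrix.fromBlocks_multiply,
      Matrix.fromBlocks_inj]
    refine ⟨?_, ?_, ?_, ?_⟩ <;>
    · simp only [hX, conjTranspose_sub, conjTranspose_add, conjTranspose_mul, conjTranspose_neg,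
        conjTranspose_conjTranspose, hω.eq, hΔ.eq, h₁h, h₂h, Matrix.mul_neg, Matrix.neg_mul,
        Matrix.mul_add, Matrix.add_mul, Matrix.mul_sub, Matrix.sub_mul, Matrix.mul_assoc]
      abel
  rw [key]
  constructor
  · rintro ⟨-, h2⟩
    have hR : S₂⁻¹ * X * S₁⁻¹ = 0 := by
      ext i j
      simpa using h2 i j
    have : X = S₂ * (S₂⁻¹ * X * S₁⁻¹) * S₁ := by
      rw [← Matrix.mul_assoc, ← Matrix.mul_assoc, Matrix.mul_nonsing_inv _ hu₂,
        Matrix.one_mul, Matrix.mul_assoc, Matrix.nonsing_inv_mul _ hu₁, Matrix.mul_one]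
    rw [hR, Matrix.mul_zero, Matrix.zero_mul] at this
    have := sub_eq_zero.mp this
    linear_combination (norm := noncomm_ring) this
  · intro h
    have hX0 : X = 0 := by rw [hX, h, sub_self]
    constructor
    · intro i j
      simp [hX0]
    · intro i j
      simp [hX0]
end

section
/- Let ω, Δ, g be real numbers with ω ≠ 0, set s = √(((ω+Δ)/2)² + g²), and let U(t) = exp((iωt/2)σz) · exp(−it(((ω+Δ)/2)σz + g σx)). Then the spectrum (set of eigenvalues) of the 2×2 matrix U(2π/ω) equals { exp(−i(2π/ω)(ω/2 + s)), exp(−i(2π/ω)(ω/2 − s)) }; consequently the quasi-energies of the corresponding periodic Hamiltonian are ±(ω/2 − √(((ω+Δ)/2)² + g²)) modulo ω. -/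
/-!
At `T = 2π/ω` the first factor is `exp(iπσz) = -1`, so `U(T) = -exp(-iT H)` with
`H = ((ω+Δ)/2)σz + gσx`. The matrix `H` is Hermitian, traceless, with determinant `-s²`, so its
spectrum is `{s, -s}`; since `-iT H` is normal, the spectral mapping theorem of the continuous
functional calculus gives `spectrum (exp(-iT H)) = {exp(∓iTs)}`, and `exp(-iTω/2) = -1` absorbs
the sign.
-/

open Matrix Complex
open scoped Matrix.Norms.L2Operator

theorem IsStarNormal.spectrum_exp {A : Type*} [CStarAlgebra A] (a : A) [IsStarNormal a] :
    spectrum ℂ (NormedSpace.exp a) = Complex.exp '' spectrum ℂ a := by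
  rw [← CFC.exp_eq_normedSpace_exp (𝕜 := ℂ), cfc_map_spectrum _ a, Complex.exp_eq_exp_ℂ]

theorem Matrix.spectrum_fin_two_eq_pair {K : Type*} [Field K] (B : Matrix (Fin 2) (Fin 2) K)
    {μ₁ μ₂ : K} (htr : B.trace = μ₁ + μ₂) (hdet : B.det = μ₁ * μ₂) : spectrum K B = {μ₁, μ₂} := by
  rw [trace_fin_two] at htr
  rw [det_fin_two] at hdet
  ext l
  have hchar : (algebraMap K (Matrix (Fin 2) (Fin 2) K) l - B).det = (l - μ₁) * (l - μ₂) := by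
    simp only [det_fin_two, sub_apply, algebraMap_matrix_apply, Algebra.algebraMap_self,
      RingHom.id_apply, Fin.isValue, ↓reduceIte, zero_ne_one, one_ne_zero]
    linear_combination hdet - l * htr
  rw [spectrum.mem_iff, isUnit_iff_isUnit_det, isUnit_iff_ne_zero, not_not, hchar,
    mul_eq_zero, sub_eq_zero, sub_eq_zero, Set.mem_insert_iff, Set.mem_singleton_iff]

theorem isSelfAdjoint_pauli_combination (h g : ℝ) :
    IsSelfAdjoint ((h : ℂ) • !![1, 0; 0, -1] + (g : ℂ) • !![0, 1; 1, 0] :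
      Matrix (Fin 2) (Fin 2) ℂ) := by
  ext i j; fin_cases i <;> fin_cases j <;> simp [Matrix.star_apply]

theorem spectrum_exp_smul_pauli_combination (h g s : ℝ) (hs : s ^ 2 = h ^ 2 + g ^ 2) (c : ℂ) :
    spectrum ℂ (NormedSpace.exp (c • ((h : ℂ) • !![1, 0; 0, -1] + (g : ℂ) • !![0, 1; 1, 0]) :
      Matrix (Fin 2) (Fin 2) ℂ)) = {Complex.exp (c * s), Complex.exp (-(c * s))} := by
  have := (isSelfAdjoint_pauli_combination h g).isStarNormal
  have hs' : (s : ℂ) ^ 2 = h ^ 2 + g ^ 2 := by exact_mod_cast hs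
  rw [IsStarNormal.spectrum_exp,
    Matrix.spectrum_fin_two_eq_pair _ (μ₁ := c * s) (μ₂ := -(c * s)), Set.image_pair]
  · simp [trace_fin_two]
  · simp only [det_fin_two, smul_of, smul_cons, smul_eq_mul, mul_one, mul_zero,
      mul_neg, smul_empty, of_add_of, add_cons, head_cons, tail_cons, add_zero, zero_add,
      empty_add_empty, of_apply, cons_val', cons_val_zero, cons_val_one, cons_val_fin_one]
    linear_combination c ^ 2 * hs'

theorem Complex.exp_neg_I_mul_half_period_add {T ω : ℂ} (h : T * ω = 2 * Real.pi) (x : ℂ) :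
    Complex.exp (-I * T * (ω / 2 + x)) = - Complex.exp (-I * T * x) := by
  rw [show -I * T * (ω / 2 + x) = -(Real.pi * I) + -I * T * x by linear_combination (-I/2) * h,
    Complex.exp_add, Complex.exp_neg, Complex.exp_pi_mul_I]
  simp

theorem exp_pi_I_smul_pauliZ :
    NormedSpace.exp ((Real.pi * I : ℂ) • !![1, 0; 0, -1] : Matrix (Fin 2) (Fin 2) ℂ) = -1 := by
  have : ((Real.pi * I : ℂ) • !![1, 0; 0, -1] : Matrix (Fin 2) (Fin 2) ℂ)
      = diagonal ![Real.pi * I, -(Real.pi * I)] := by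
    ext i j; fin_cases i <;> fin_cases j <;> simp
  rw [this, exp_diagonal]
  ext i j
  fin_cases i <;> fin_cases j <;> simp [Pi.exp_def, ← Complex.exp_eq_exp_ℂ, Complex.exp_neg]

/-- Let `ω ≠ 0`, `s = √(((ω+Δ)/2)² + g²)` and
`U(t) = exp((iωt/2)σz) ⬝ exp(-it(((ω+Δ)/2)σz + gσx))`. Then the spectrum of the
monodromy matrix `U(2π/ω)` equals `{exp(-i(2π/ω)(ω/2+s)), exp(-i(2π/ω)(ω/2-s))}`;
consequently every eigenvalue is of the form `exp(-i(2π/ω)ε)` with quasi-energy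
`ε = ±(ω/2 - s)` modulo `ω`. -/
theorem stmt19 (ω Δ g : ℝ) (hω : ω ≠ 0)
    (σx σz : Matrix (Fin 2) (Fin 2) ℂ)
    (hx : σx = !![0, 1; 1, 0]) (hz : σz = !![1, 0; 0, -1])
    (s : ℝ) (hs : s = Real.sqrt (((ω + Δ) / 2) ^ 2 + g ^ 2))
    (U : ℝ → Matrix (Fin 2) (Fin 2) ℂ)
    (hU : U = fun (t : ℝ) => NormedSpace.exp ((I * ω * (t : ℂ) / 2) • σz) *
      NormedSpace.exp ((-(I * (t : ℂ))) • ((((ω : ℂ) + Δ) / 2) • σz + (g : ℂ) • σx))) :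
    spectrum ℂ (U (2 * Real.pi / ω)) =
      {Complex.exp (-I * (2 * Real.pi / ω) * ((ω : ℂ) / 2 + (s : ℂ))),
        Complex.exp (-I * (2 * Real.pi / ω) * ((ω : ℂ) / 2 - (s : ℂ)))} ∧
      ∀ μ ∈ spectrum ℂ (U (2 * Real.pi / ω)), ∃ k : ℤ,
        μ = Complex.exp (-I * (2 * Real.pi / ω) * (((ω : ℂ) / 2 - (s : ℂ)) + (k : ℂ) * ω)) ∨
        μ = Complex.exp (-I * (2 * Real.pi / ω) * (-((ω : ℂ) / 2 - (s : ℂ)) + (k : ℂ) * ω)) := by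
  have hperiod : (2 * Real.pi / ω : ℂ) * ω = 2 * Real.pi := by
    field_simp [show (ω : ℂ) ≠ 0 by exact_mod_cast hω]
  have hs2 : s ^ 2 = ((ω + Δ) / 2) ^ 2 + g ^ 2 := by
    rw [hs, Real.sq_sqrt (by positivity)]
  have hmonodromy : U (2 * Real.pi / ω) = -NormedSpace.exp ((-(I * (2 * Real.pi / ω : ℂ))) •
      (((((ω + Δ) / 2 : ℝ) : ℂ)) • !![1, 0; 0, -1] + (g : ℂ) • !![0, 1; 1, 0])) := by
    have hhalf : I * ω * ((2 * Real.pi / ω : ℝ) : ℂ) / 2 = Real.pi * I := by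
      push_cast
      linear_combination (I / 2) * hperiod
    rw [hU, hx, hz]
    beta_reduce
    rw [hhalf, exp_pi_I_smul_pauliZ, neg_one_mul]
    push_cast
    rfl
  have hspec : spectrum ℂ (U (2 * Real.pi / ω)) =
      {Complex.exp (-I * (2 * Real.pi / ω) * ((ω : ℂ) / 2 + (s : ℂ))),
        Complex.exp (-I * (2 * Real.pi / ω) * ((ω : ℂ) / 2 - (s : ℂ)))} := by
    rw [hmonodromy, ← spectrum.neg_eq, spectrum_exp_smul_pauli_combination _ _ _ hs2,
      Set.neg_insert, Set.neg_singleton, sub_eq_add_neg,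
      Complex.exp_neg_I_mul_half_period_add hperiod, Complex.exp_neg_I_mul_half_period_add hperiod]
    simp only [neg_mul, mul_neg]
  refine ⟨hspec, fun μ hμ => ?_⟩
  rw [hspec] at hμ
  rcases hμ with rfl | rfl
  · exact ⟨1, Or.inr (by congr 1; push_cast; ring)⟩
  · exact ⟨0, Or.inl (by congr 1; push_cast; ring)⟩
end
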